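/- For each m ≥ 0 and action a, the closed equation a^{2m+1}0 + a(a^m0 + a^{2m}0) ≈ a(a^m0 + a^{2m}0) is sound modulo concrete impossible futures equivalence. -/
import Mathlib


/-- BCCSP terms over concrete actions `A` and variables `V` (no τ prefix). -/
inductive TmP (A V : Type) : Type
  | nil : TmP A V
  | var : V → TmP A V
  | plus : TmP A V → TmP A V → TmP A V
  | pre : A → TmP A V → TmP A V

namespace TmP

variable {A V : Type}

/-- The operational semantics of BCCSP. -/
inductive Step : TmP A V → A → TmP A V → Prop
  | pre (a : A) (t : TmP A V) : Step (.pre a t) a t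
  | plusL {t : TmP A V} {a : A} {t' : TmP A V} (u : TmP A V) :
      Step t a t' → Step (.plus t u) a t'
  | plusR (t : TmP A V) {u : TmP A V} {a : A} {u' : TmP A V} :
      Step u a u' → Step (.plus t u) a u'

/-- Traces leading to a state. -/
inductive TraceTo : TmP A V → List A → TmP A V → Prop
  | refl (t : TmP A V) : TraceTo t [] t
  | act {t : TmP A V} {a : A} {t' : TmP A V} {w : List A} {u : TmP A V} :
      Step t a t' → TraceTo t' w u → TraceTo t (a :: w) u

/-- The set of traces of a term. -/
def T (t : TmP A V) : Set (List A) := {w | ∃ t', TraceTo t w t'}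

/-- `(w, B)` is an impossible future of `t`. -/
def ImpFut (t : TmP A V) (w : List A) (B : Set (List A)) : Prop :=
  ∃ t', TraceTo t w t' ∧ ∀ s ∈ T t', s ∉ B

/-- The impossible futures preorder. -/
def IFle (p q : TmP A V) : Prop := ∀ w B, ImpFut p w B → ImpFut q w B

/-- Impossible futures equivalence. -/
def IFeq (p q : TmP A V) : Prop := IFle p q ∧ IFle q p

/-- The variables occurring in a term. -/
def vars : TmP A V → Set V
  | nil => ∅
  | var x => {x}
  | plus t u => vars t ∪ vars u
  | pre _ t => vars t

/-- A term is closed if it contains no variables. -/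
def Closed (t : TmP A V) : Prop := vars t = ∅

/-- Substitution. -/
def subst (σ : V → TmP A V) : TmP A V → TmP A V
  | nil => nil
  | var x => σ x
  | plus t u => plus (subst σ t) (subst σ u)
  | pre a t => pre a (subst σ t)

/-- `n`-fold prefixing with the action `a`. -/
def npre (a : A) : ℕ → TmP A V → TmP A V
  | 0, t => t
  | n + 1, t => pre a (npre a n t)

/-- Finite sums of terms. -/
def listSum : List (TmP A V) → TmP A V
  | [] => nil
  | t :: l => plus t (listSum l)

/-- The axioms A1-4 + IF1 + IF2 (as instantiation-closed schemas; equational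
axioms are listed in both directions for inequational derivability). -/
inductive AXIF : TmP A V → TmP A V → Prop
  | A1 (t u : TmP A V) : AXIF (.plus t u) (.plus u t)
  | A2 (t u v : TmP A V) : AXIF (.plus (.plus t u) v) (.plus t (.plus u v))
  | A2r (t u v : TmP A V) : AXIF (.plus t (.plus u v)) (.plus (.plus t u) v)
  | A3 (t : TmP A V) : AXIF (.plus t t) t
  | A3r (t : TmP A V) : AXIF t (.plus t t)
  | A4 (t : TmP A V) : AXIF (.plus t .nil) t
  | A4r (t : TmP A V) : AXIF t (.plus t .nil)
  | IF1 (a : A) (t u : TmP A V) :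
      AXIF (.pre a (.plus t u)) (.plus (.pre a t) (.pre a u))
  | IF2 (a : A) (t u v : TmP A V) :
      AXIF (.plus (.pre a t) (.pre a (.plus u v)))
           (.plus (.pre a (.plus t u)) (.plus (.pre a t) (.pre a (.plus u v))))
  | IF2r (a : A) (t u v : TmP A V) :
      AXIF (.plus (.pre a (.plus t u)) (.plus (.pre a t) (.pre a (.plus u v))))
           (.plus (.pre a t) (.pre a (.plus u v)))

/-- Equational derivability from an axiomatization `E`. -/
inductive Deriv (E : TmP A V → TmP A V → Prop) : TmP A V → TmP A V → Prop
  | ax {t u : TmP A V} : E t u → Deriv E t u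
  | inst {t u : TmP A V} (σ : V → TmP A V) : E t u → Deriv E (subst σ t) (subst σ u)
  | refl (t : TmP A V) : Deriv E t t
  | symm {t u : TmP A V} : Deriv E t u → Deriv E u t
  | trans {t u v : TmP A V} : Deriv E t u → Deriv E u v → Deriv E t v
  | pre (a : A) {t u : TmP A V} : Deriv E t u → Deriv E (.pre a t) (.pre a u)
  | plus {t u t' u' : TmP A V} :
      Deriv E t t' → Deriv E u u' → Deriv E (.plus t u) (.plus t' u')

/-- Inequational derivability from an axiomatization `E` (no symmetry). -/
inductive IDeriv (E : TmP A V → TmP A V → Prop) : TmP A V → TmP A V → Prop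
  | ax {t u : TmP A V} : E t u → IDeriv E t u
  | inst {t u : TmP A V} (σ : V → TmP A V) : E t u → IDeriv E (subst σ t) (subst σ u)
  | refl (t : TmP A V) : IDeriv E t t
  | trans {t u v : TmP A V} : IDeriv E t u → IDeriv E u v → IDeriv E t v
  | pre (a : A) {t u : TmP A V} : IDeriv E t u → IDeriv E (.pre a t) (.pre a u)
  | plus {t u t' u' : TmP A V} :
      IDeriv E t t' → IDeriv E u u' → IDeriv E (.plus t u) (.plus t' u')

end TmP

/-- `a^n 0` as a closed BCCSP term. -/
def apowP {A : Type} (a : A) (n : ℕ) : TmP A Empty := TmP.npre a n .nil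

namespace TmP

variable {A V : Type}

lemma traceTo_nil_eq {t t' : TmP A V} (h : TraceTo t [] t') : t' = t := by
  cases h; rfl

lemma step_npre {a b : A} {n : ℕ} {t' : TmP A V}
    (h : Step (npre a n .nil) b t') :
    ∃ n', n = n' + 1 ∧ b = a ∧ t' = npre a n' .nil := by
  cases n with
  | zero => cases h
  | succ n =>
    simp only [npre] at h
    cases h
    exact ⟨n, rfl, rfl, rfl⟩

lemma traceTo_npre {a : A} : ∀ {w : List A} {n : ℕ} {t' : TmP A V},
    TraceTo (npre a n .nil) w t' →
    ∃ k, k ≤ n ∧ w = List.replicate k a ∧ t' = npre a (n - k) .nil := by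
  intro w
  induction w with
  | nil =>
    intro n t' h
    exact ⟨0, Nat.zero_le _, rfl, by rw [traceTo_nil_eq h, Nat.sub_zero]⟩
  | cons b w ih =>
    intro n t' h
    cases h with
    | act hs ht =>
      obtain ⟨n', rfl, rfl, rfl⟩ := step_npre hs
      obtain ⟨k, hk, rfl, rfl⟩ := ih ht
      exact ⟨k + 1, by omega, by rw [List.replicate_succ], by congr 1; omega⟩

lemma traceTo_npre_of_le {a : A} : ∀ {k n : ℕ}, k ≤ n →
    TraceTo (npre a n (.nil : TmP A V)) (List.replicate k a) (npre a (n - k) .nil) := by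
  intro k
  induction k with
  | zero => intro n _; simpa using TraceTo.refl _
  | succ k ih =>
    intro n hn
    cases n with
    | zero => omega
    | succ n =>
      rw [List.replicate_succ]
      exact TraceTo.act (Step.pre a _) (by simpa [Nat.succ_sub_succ] using ih (by omega))

lemma mem_T_npre {a : A} {n : ℕ} {w : List A} :
    w ∈ T (npre a n (.nil : TmP A V)) ↔ ∃ k, k ≤ n ∧ w = List.replicate k a := by
  constructor
  · rintro ⟨t', h⟩
    obtain ⟨k, hk, rfl, _⟩ := traceTo_npre h
    exact ⟨k, hk, rfl⟩
  · rintro ⟨k, hk, rfl⟩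
    exact ⟨_, traceTo_npre_of_le hk⟩

lemma traceTo_plus_cases {t u v : TmP A V} {w : List A}
    (h : TraceTo (.plus t u) w v) :
    (w = [] ∧ v = .plus t u) ∨ (w ≠ [] ∧ (TraceTo t w v ∨ TraceTo u w v)) := by
  cases h with
  | refl => exact Or.inl ⟨rfl, rfl⟩
  | act hs ht =>
    cases hs with
    | plusL _ h' => exact Or.inr ⟨by simp, Or.inl (TraceTo.act h' ht)⟩
    | plusR _ h' => exact Or.inr ⟨by simp, Or.inr (TraceTo.act h' ht)⟩

lemma traceTo_plusL' {t u v : TmP A V} {w : List A} (hw : w ≠ [])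
    (h : TraceTo t w v) : TraceTo (.plus t u) w v := by
  cases h with
  | refl => exact absurd rfl hw
  | act hs ht => exact TraceTo.act (Step.plusL _ hs) ht

lemma traceTo_plusR' {t u v : TmP A V} {w : List A} (hw : w ≠ [])
    (h : TraceTo u w v) : TraceTo (.plus t u) w v := by
  cases h with
  | refl => exact absurd rfl hw
  | act hs ht => exact TraceTo.act (Step.plusR _ hs) ht

lemma mem_T_plus {t u : TmP A V} {w : List A} :
    w ∈ T (.plus t u) ↔ w ∈ T t ∨ w ∈ T u := by
  constructor
  · rintro ⟨v, h⟩
    rcases traceTo_plus_cases h with ⟨rfl, _⟩ | ⟨_, h | h⟩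
    · exact Or.inl ⟨t, TraceTo.refl t⟩
    · exact Or.inl ⟨v, h⟩
    · exact Or.inr ⟨v, h⟩
  · rintro (⟨v, h⟩ | ⟨v, h⟩)
    · rcases eq_or_ne w [] with rfl | hw
      · exact ⟨_, TraceTo.refl _⟩
      · exact ⟨v, traceTo_plusL' hw h⟩
    · rcases eq_or_ne w [] with rfl | hw
      · exact ⟨_, TraceTo.refl _⟩
      · exact ⟨v, traceTo_plusR' hw h⟩

lemma traceTo_pre_cases {a : A} {t v : TmP A V} {w : List A}
    (h : TraceTo (.pre a t) w v) :
    (w = [] ∧ v = .pre a t) ∨ ∃ w', w = a :: w' ∧ TraceTo t w' v := by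
  cases h with
  | refl => exact Or.inl ⟨rfl, rfl⟩
  | act hs ht => cases hs; exact Or.inr ⟨_, rfl, ht⟩

lemma rep_mem_T_q {a : A} {m k : ℕ} (hk : k ≤ 2 * m + 1) :
    List.replicate k a ∈
      T (.pre a (.plus (npre a m .nil) (npre a (2 * m) .nil)) : TmP A V) := by
  cases k with
  | zero => exact ⟨_, TraceTo.refl _⟩
  | succ k =>
    have : List.replicate k a ∈
        T (.plus (npre a m .nil) (npre a (2 * m) .nil) : TmP A V) := by
      rw [mem_T_plus]
      exact Or.inr (mem_T_npre.mpr ⟨k, by omega, rfl⟩)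
    obtain ⟨v, hv⟩ := this
    exact ⟨v, by rw [List.replicate_succ]; exact TraceTo.act (Step.pre a _) hv⟩

end TmP

/-- for each `m ≥ 0` the closed equation
`a^{2m+1}0 + a(a^m0 + a^{2m}0) ≈ a(a^m0 + a^{2m}0)` is sound modulo concrete
impossible futures equivalence. -/
theorem stmt14 {A : Type} (a : A) (m : ℕ) :
    TmP.IFeq
      (.plus (apowP a (2 * m + 1))
             (.pre a (.plus (apowP a m) (apowP a (2 * m)))))
      (.pre a (.plus (apowP a m) (apowP a (2 * m)))) := by
  simp only [apowP]
  set r : TmP A Empty := .plus (TmP.npre a m .nil) (TmP.npre a (2 * m) .nil) with hr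
  constructor
  · -- p ≤ q
    rintro w B ⟨t', ht, hB⟩
    rcases TmP.traceTo_plus_cases ht with ⟨rfl, rfl⟩ | ⟨hw, hs | hq⟩
    · -- w = [], residual is p itself; use q with T q ⊆ T p
      refine ⟨.pre a r, TmP.TraceTo.refl _, ?_⟩
      intro s hs
      apply hB
      rcases eq_or_ne s [] with rfl | hne
      · exact ⟨_, TmP.TraceTo.refl _⟩
      · obtain ⟨v, hv⟩ := hs
        exact ⟨v, TmP.traceTo_plusR' hne hv⟩
    · -- trace through a^{2m+1}0
      obtain ⟨k, hk, rfl, rfl⟩ := TmP.traceTo_npre hs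
      have hk1 : 1 ≤ k := by
        rcases Nat.eq_zero_or_pos k with rfl | h
        · exact absurd rfl hw
        · exact h
      rcases eq_or_lt_of_le hk1 with hk1' | hk2
      · -- k = 1 : use residual r
        subst hk1'
        refine ⟨r, ?_, ?_⟩
        · rw [show List.replicate 1 a = [a] from rfl]
          exact TmP.TraceTo.act (TmP.Step.pre a r) (TmP.TraceTo.refl r)
        · intro s hsr
          apply hB
          rw [TmP.mem_T_plus] at hsr
          rcases hsr with h | h
          · rw [TmP.mem_T_npre] at h ⊢
            obtain ⟨j, hj, rfl⟩ := h
            exact ⟨j, by omega, rfl⟩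
          · rw [TmP.mem_T_npre] at h ⊢
            obtain ⟨j, hj, rfl⟩ := h
            exact ⟨j, by omega, rfl⟩
      · -- k ≥ 2 : use residual a^{2m+1-k}0
        refine ⟨TmP.npre a (2 * m + 1 - k) .nil, ?_, hB⟩
        have hrep : List.replicate k a = a :: List.replicate (k - 1) a := by
          conv_lhs => rw [show k = (k - 1) + 1 by omega, List.replicate_succ]
        rw [hrep]
        refine TmP.TraceTo.act (TmP.Step.pre a r) ?_
        have hne : List.replicate (k - 1) a ≠ [] := by
          simp [List.replicate_eq_nil_iff]; omega
        have htr := TmP.traceTo_npre_of_le (a := a) (V := Empty)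
          (k := k - 1) (n := 2 * m) (by omega)
        rw [show 2 * m - (k - 1) = 2 * m + 1 - k by omega] at htr
        exact TmP.traceTo_plusR' hne htr
    · exact ⟨t', hq, hB⟩
  · -- q ≤ p
    rintro w B ⟨t', ht, hB⟩
    rcases eq_or_ne w [] with rfl | hw
    · have h0 := TmP.traceTo_nil_eq ht
      subst h0
      refine ⟨_, TmP.TraceTo.refl _, ?_⟩
      intro s hsp
      apply hB
      rw [TmP.mem_T_plus] at hsp
      rcases hsp with h | h
      · rw [TmP.mem_T_npre] at h
        obtain ⟨k, hk, rfl⟩ := h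
        exact TmP.rep_mem_T_q hk
      · exact h
    · exact ⟨t', TmP.traceTo_plusR' hw ht, hB⟩
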